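/- arXiv:1109.0363 — 2 statements merged into one kernel-verified Lean document; each statement's English description precedes it below -/
import Mathlib

section
/- Let H = ℓ²(ℕ, ℝ), let (αₙ) be positive reals with Σₙ αₙ² < ∞, let b_Dir be the indicator function of the irrationals and B_Dir(x) = Σₙ αₙ b_Dir(xₙ) eₙ. Then for every initial condition x ∈ H and every ε > 0, the set of continuous functions X : [0,ε] → H satisfying X(t) = x + ∫₀ᵗ B_Dir(X(s)) ds (Bochner integral in H) for all t ∈ [0,ε] is infinite; i.e., the equation dX/dt = B_Dir(X) in H has infinitely many solutions from every initial condition. -/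
/-!
For every `τ ≥ 0` with `x₀ + α₀ τ` rational, the path that moves with velocity `α` but freezes its
coordinate `0` at time `τ` is a solution: for almost every `s` all moving coordinates
`xₙ + αₙ s` are irrational, so `B_Dir` equals `α` along the path before `τ` and `α - α₀ e₀`
after it, the frozen coordinate being rational. Such `τ` form an infinite subset of `(0, ε)`, and
distinct `τ` give distinct solutions.
-/

open MeasureTheory intervalIntegral

/-- The Dirichlet function: indicator of the irrationals. -/
noncomputable def bDir : ℝ → ℝ := Set.indicator {x : ℝ | Irrational x} 1

open Set

theorem bDir_of_irrational {y : ℝ} (hy : Irrational y) : bDir y = 1 :=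
  indicator_of_mem hy 1

theorem bDir_of_not_irrational {y : ℝ} (hy : ¬Irrational y) : bDir y = 0 :=
  indicator_of_notMem hy 1

theorem countable_setOf_not_irrational_add_mul (b : ℝ) {a : ℝ} (ha : a ≠ 0) :
    {s : ℝ | ¬Irrational (b + a * s)}.Countable := by
  simp only [Irrational, not_not]
  exact (countable_range _).preimage (add_right_injective b |>.comp (mul_right_injective₀ ha))

theorem ae_forall_irrational_add_mul {ι : Type*} [Countable ι] (b : ι → ℝ) {a : ι → ℝ}
    (ha : ∀ i, a i ≠ 0) : ∀ᵐ s : ℝ, ∀ i, Irrational (b i + a i * s) :=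
  ae_all_iff.2 fun i =>
    (measure_eq_zero_iff_ae_notMem.1
      ((countable_setOf_not_irrational_add_mul (b i) (ha i)).measure_zero _)).mono
      fun _ h => not_not.1 h

theorem infinite_Ioo_inter_setOf_not_irrational_add_mul (b : ℝ) {a : ℝ} (ha : 0 < a) {u v : ℝ}
    (huv : u < v) : (Ioo u v ∩ {τ | ¬Irrational (b + a * τ)}).Infinite := by
  obtain ⟨q₁, hu, hq₁⟩ := exists_rat_btwn (by gcongr : b + a * u < b + a * v)
  obtain ⟨q₂, hq₁₂, hv⟩ := exists_rat_btwn hq₁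
  have hinj : InjOn (fun q : ℚ => ((q : ℝ) - b) / a) (Ioo q₁ q₂) := fun q _ q' _ h => by
    simpa [div_left_inj' ha.ne'] using h
  refine infinite_of_injOn_mapsTo hinj (fun q ⟨h₁, h₂⟩ => ⟨⟨?_, ?_⟩, ?_⟩)
    (Ioo_infinite (by exact_mod_cast hq₁₂))
  · rw [lt_div_iff₀ ha]
    have : (q₁ : ℝ) < q := by exact_mod_cast h₁
    linarith
  · rw [div_lt_iff₀ ha]
    have : (q : ℝ) < q₂ := by exact_mod_cast h₂
    linarith
  · show ¬Irrational (b + a * ((q - b) / a))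
    rw [mul_div_cancel₀ _ ha.ne', add_sub_cancel]
    exact q.not_irrational

section StoppedIntegral

variable {E : Type*} [NormedAddCommGroup E]

theorem intervalIntegrable_of_ae_eq_const {f : ℝ → E} {u v : ℝ} {g : E}
    (h : ∀ᵐ s, s ∈ uIoc u v → f s = g) : IntervalIntegrable f volume u v :=
  intervalIntegrable_const.congr_ae <| (ae_restrict_iff' measurableSet_uIoc).2 <|
    h.mono fun _ hs hmem => (hs hmem).symm

variable [NormedSpace ℝ E] [CompleteSpace E]

theorem integral_eq_smul_of_ae_eq_const {f : ℝ → E} {u v : ℝ} {g : E}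
    (h : ∀ᵐ s, s ∈ uIoc u v → f s = g) : ∫ s in u..v, f s = (v - u) • g := by
  rw [integral_congr_ae h, intervalIntegral.integral_const]

theorem integral_eq_of_ae_eq_before_after {f : ℝ → E} {a c : E} {τ t : ℝ} (hτ : 0 ≤ τ)
    (ht : 0 ≤ t) (hbefore : ∀ᵐ s, s < τ → f s = a + c) (hafter : ∀ᵐ s, τ < s → f s = a) :
    ∫ s in 0..t, f s = t • a + min t τ • c := by
  set m := min t τ
  have hm : 0 ≤ m := le_min ht hτ
  have hbefore' : ∀ᵐ s, s ∈ uIoc 0 m → f s = a + c := by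
    filter_upwards [hbefore, volume.ae_ne τ] with s hs hsτ hmem
    rw [uIoc_of_le hm] at hmem
    exact hs ((hmem.2.trans (min_le_right t τ)).lt_of_ne hsτ)
  have hafter' : ∀ᵐ s, s ∈ uIoc m t → f s = a := by
    refine hafter.mono fun s hs hmem => hs ?_
    rw [uIoc_of_le (min_le_left t τ)] at hmem
    exact not_le.1 fun hsτ => hmem.1.not_ge (le_min hmem.2 hsτ)
  rw [← integral_add_adjacent_intervals (intervalIntegrable_of_ae_eq_const hbefore')
    (intervalIntegrable_of_ae_eq_const hafter'), integral_eq_smul_of_ae_eq_const hbefore',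
    integral_eq_smul_of_ae_eq_const hafter']
  module

end StoppedIntegral

local notation "ℓ²" => lp (fun _ : ℕ => ℝ) 2

theorem memℓp_two_of_summable_sq {α : ℕ → ℝ} (h : Summable fun n => α n ^ 2) : Memℓp α 2 :=
  memℓp_gen <| by simpa using h

noncomputable def stoppedPath (x a : ℓ²) (τ t : ℝ) : ℓ² :=
  x + t • (a - lp.single 2 0 (a 0)) + min t τ • lp.single 2 0 (a 0)

section StoppedPath

variable (x a : ℓ²) (τ t : ℝ)

theorem stoppedPath_apply_zero : stoppedPath x a τ t 0 = x 0 + a 0 * min t τ := by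
  simp only [stoppedPath, lp.coeFn_add, lp.coeFn_smul, lp.coeFn_sub, Pi.add_apply, Pi.smul_apply,
    Pi.sub_apply, lp.single_apply_self, smul_eq_mul]
  ring

theorem stoppedPath_apply_of_ne_zero {n : ℕ} (hn : n ≠ 0) :
    stoppedPath x a τ t n = x n + a n * t := by
  simp only [stoppedPath, lp.coeFn_add, lp.coeFn_smul, lp.coeFn_sub, Pi.add_apply, Pi.smul_apply,
    Pi.sub_apply, lp.single_apply_ne 2 0 _ hn, smul_eq_mul]
  ring

theorem continuous_stoppedPath : Continuous (stoppedPath x a τ) := by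
  unfold stoppedPath
  fun_prop

end StoppedPath

section DirichletField

variable {B : ℓ² → ℓ²} {x a : ℓ²} {τ s : ℝ}

theorem apply_stoppedPath_of_lt (hB : ∀ y n, B y n = a n * bDir (y n)) (hsτ : s < τ)
    (hirr : ∀ n, Irrational (x n + a n * s)) : B (stoppedPath x a τ s) = a := by
  ext n
  rw [hB]
  rcases eq_or_ne n 0 with rfl | hn
  · rw [stoppedPath_apply_zero, min_eq_left hsτ.le, bDir_of_irrational (hirr 0), mul_one]
  · rw [stoppedPath_apply_of_ne_zero _ _ _ _ hn, bDir_of_irrational (hirr n), mul_one]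

theorem apply_stoppedPath_of_gt (hB : ∀ y n, B y n = a n * bDir (y n)) (hτs : τ < s)
    (hτ : ¬Irrational (x 0 + a 0 * τ)) (hirr : ∀ n, Irrational (x n + a n * s)) :
    B (stoppedPath x a τ s) = a - lp.single 2 0 (a 0) := by
  ext n
  rw [hB, lp.coeFn_sub, Pi.sub_apply]
  rcases eq_or_ne n 0 with rfl | hn
  · rw [stoppedPath_apply_zero, min_eq_right hτs.le, bDir_of_not_irrational hτ,
      lp.single_apply_self, mul_zero, sub_self]
  · rw [stoppedPath_apply_of_ne_zero _ _ _ _ hn, bDir_of_irrational (hirr n), mul_one,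
      lp.single_apply_ne 2 0 _ hn, sub_zero]

theorem stoppedPath_eq_add_integral (hB : ∀ y n, B y n = a n * bDir (y n)) (ha : ∀ n, a n ≠ 0)
    (hτ₀ : 0 ≤ τ) (hτ : ¬Irrational (x 0 + a 0 * τ)) {t : ℝ} (ht : 0 ≤ t) :
    stoppedPath x a τ t = x + ∫ s in 0..t, B (stoppedPath x a τ s) := by
  have hirr := ae_forall_irrational_add_mul (fun n => x n) ha
  rw [integral_eq_of_ae_eq_before_after hτ₀ ht (c := lp.single 2 0 (a 0))
    (hirr.mono fun s hs hsτ => by rw [apply_stoppedPath_of_lt hB hsτ hs, sub_add_cancel])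
    (hirr.mono fun s hs hτs => apply_stoppedPath_of_gt hB hτs hτ hs), stoppedPath, add_assoc]

theorem injOn_domRestrict_stoppedPath (x : ℓ²) (ha : a 0 ≠ 0) {ε : ℝ} (hε : 0 ≤ ε) :
    InjOn (fun τ => (Icc 0 ε).domRestrict (stoppedPath x a τ)) (Iic ε) := by
  intro τ hτ τ' hτ' h
  have h0 : stoppedPath x a τ ε 0 = stoppedPath x a τ' ε 0 :=
    congrArg (fun f => f ⟨ε, hε, le_rfl⟩ 0) h
  rwa [stoppedPath_apply_zero, stoppedPath_apply_zero, min_eq_right hτ, min_eq_right hτ',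
    add_right_inj, mul_right_inj' ha] at h0

end DirichletField

/-- Let `H = ℓ²(ℕ, ℝ)`, `(αₙ)` positive with `Σ αₙ² < ∞`, and `B_Dir x = Σₙ αₙ bDir(xₙ) eₙ`.
Then for every `x ∈ H` and `ε > 0`, there are infinitely many continuous solutions on `[0, ε]`
of `X(t) = x + ∫₀ᵗ B_Dir(X(s)) ds` (Bochner integral in `H`); solutions are identified with
their restrictions to `[0, ε]`. -/
theorem stmt5 (α : ℕ → ℝ) (hα : ∀ n, 0 < α n) (hsum : Summable fun n => (α n) ^ 2)
    (B : lp (fun _ : ℕ => ℝ) 2 → lp (fun _ : ℕ => ℝ) 2)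
    (hB : ∀ x : lp (fun _ : ℕ => ℝ) 2, ∀ n : ℕ, B x n = α n * bDir (x n))
    (x : lp (fun _ : ℕ => ℝ) 2) (ε : ℝ) (hε : 0 < ε) :
    {f : Set.Icc (0:ℝ) ε → lp (fun _ : ℕ => ℝ) 2 | ∃ Y : ℝ → lp (fun _ : ℕ => ℝ) 2,
      ContinuousOn Y (Set.Icc (0:ℝ) ε) ∧
      (∀ t ∈ Set.Icc (0:ℝ) ε, Y t = x + ∫ s in (0:ℝ)..t, B (Y s)) ∧
      f = (Set.Icc (0:ℝ) ε).restrict Y}.Infinite := by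
  set a : ℓ² := ⟨α, memℓp_two_of_summable_sq hsum⟩
  have ha : ∀ n, a n ≠ 0 := fun n => (hα n).ne'
  have hstops := infinite_Ioo_inter_setOf_not_irrational_add_mul (x 0) (hα 0) hε
  refine infinite_of_injOn_mapsTo ((injOn_domRestrict_stoppedPath x (ha 0) hε.le).mono
    fun τ hτ => hτ.1.2.le) ?_ hstops
  rintro τ ⟨⟨hτ₀, -⟩, hτ⟩
  exact ⟨stoppedPath x a τ, (continuous_stoppedPath x a τ).continuousOn,
    fun t ht => stoppedPath_eq_add_integral hB ha hτ₀.le hτ ht.1, rfl⟩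
end

section
/- Let λ > 0 and let b_Dir be the indicator function of the irrationals. Then the two distinct continuous functions X(t) = (1 − e^{−λt})/λ and X̃(t) = 0 both satisfy the mild integral equation X(t) = ∫₀ᵗ e^{−λ(t−s)} b_Dir(X(s)) ds for all t ≥ 0. In particular the mild equation dX/dt = −λX + b_Dir(X), X(0) = 0, has at least two solutions. -/
open MeasureTheory intervalIntegral

lemma bDir_zero : bDir 0 = 0 := by
  simp [bDir, Irrational]

lemma bDir_of_irrational_s7 {x : ℝ} (h : Irrational x) : bDir x = 1 := by
  simp [bDir, h]

lemma ae_irrational_comp_of_injective {α : Type*} [MeasurableSpace α] {μ : Measure α}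
    [MeasurableSingletonClass α] [NullSingletonClass μ] {f : α → ℝ} (hf : Function.Injective f) :
    ∀ᵐ a ∂μ, Irrational (f a) :=
  (((Set.countable_range ((↑) : ℚ → ℝ)).preimage hf).mono fun _ ↦ not_not.mp).measure_zero μ

lemma integral_exp_neg_mul_sub (lam t : ℝ) (hlam : lam ≠ 0) :
    ∫ s in (0:ℝ)..t, Real.exp (-lam * (t - s)) = (1 - Real.exp (-lam * t)) / lam := by
  rw [intervalIntegral.integral_comp_sub_left (fun u => Real.exp (-lam * u)),
    intervalIntegral.integral_comp_mul_left Real.exp (neg_ne_zero.mpr hlam), integral_exp]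
  simp only [sub_zero, sub_self, mul_zero, Real.exp_zero, smul_eq_mul]
  field_simp
  ring

lemma one_sub_exp_neg_mul_div_injective {lam : ℝ} (hlam : lam ≠ 0) :
    Function.Injective (fun t : ℝ => (1 - Real.exp (-lam * t)) / lam) := fun a b h => by
  simpa [hlam] using h

/-- For `λ > 0`, the two distinct continuous functions `X t = (1 - e^{-λt})/λ` and `X̃ = 0`
both satisfy the mild integral equation `X t = ∫₀ᵗ e^{-λ(t-s)} bDir (X s) ds` for all `t ≥ 0`.
In particular the mild equation `dX/dt = -λX + bDir X`, `X 0 = 0`, has at least two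
solutions. -/
theorem stmt7 (lam : ℝ) (hlam : 0 < lam) :
    (fun t : ℝ => (1 - Real.exp (-lam * t)) / lam) ≠ (fun _ : ℝ => (0 : ℝ)) ∧
    Continuous (fun t : ℝ => (1 - Real.exp (-lam * t)) / lam) ∧
    Continuous (fun _ : ℝ => (0 : ℝ)) ∧
    (∀ t : ℝ, 0 ≤ t →
      (1 - Real.exp (-lam * t)) / lam =
        ∫ s in (0:ℝ)..t, Real.exp (-lam * (t - s)) *
          bDir ((1 - Real.exp (-lam * s)) / lam)) ∧
    (∀ t : ℝ, 0 ≤ t →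
      (0 : ℝ) = ∫ s in (0:ℝ)..t, Real.exp (-lam * (t - s)) * bDir (0 : ℝ)) := by
  have hX := one_sub_exp_neg_mul_div_injective hlam.ne'
  refine ⟨fun h => ?_, by fun_prop, continuous_const, fun t _ => ?_, fun t _ => by simp [bDir_zero]⟩
  · exact one_ne_zero (hX ((congrFun h 1).trans (by simp)))
  · have hae : ∀ᵐ s, s ∈ Set.uIoc 0 t →
        Real.exp (-lam * (t - s)) * bDir ((1 - Real.exp (-lam * s)) / lam) =
          Real.exp (-lam * (t - s)) :=
      (ae_irrational_comp_of_injective hX).mono fun s hs _ => by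
        rw [bDir_of_irrational_s7 hs, mul_one]
    rw [integral_congr_ae hae, integral_exp_neg_mul_sub lam t hlam.ne']
end
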